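/- arXiv:1306.5461 — 2 statements merged into one kernel-verified Lean document; each statement's English description precedes it below -/
import Mathlib

section
/- Let H be a real Hilbert space, Ĝ ⊆ H a closed convex cone, and Ḡ the closed linear span of Ĝ. If κ̂ and κ̄ denote the best approximations of κ ∈ H in Ĝ and Ḡ respectively, then ‖κ̂‖ ≤ ‖κ̄‖, with strict inequality unless κ̂ = κ̄. -/
/-!
The projection `κhat` onto a cone is orthogonal to the residual `κ - κhat`, because the whole ray
through `κhat` lies in the cone; the residual `κ - κbar` of the projection onto the subspace is
orthogonal to every element of it, in particular to `κhat`. Subtracting, `κbar - κhat ⟂ κhat`, so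
Pythagoras gives `‖κbar‖² = ‖κhat‖² + ‖κbar - κhat‖²`.
-/

open RealInnerProductSpace

section

variable {F : Type*} [NormedAddCommGroup F] [InnerProductSpace ℝ F]

theorem inner_sub_le_zero_of_forall_norm_sub_le {K : Set F} (hK : Convex ℝ K) {u v : F}
    (hv : v ∈ K) (hmin : ∀ w ∈ K, ‖u - v‖ ≤ ‖u - w‖) : ∀ w ∈ K, ⟪u - v, w - v⟫ ≤ 0 :=
  (norm_eq_iInf_iff_real_inner_le_zero hK hv).1
    (IsMinOn.iInf_eq (f := fun w => ‖u - w‖) hv (isMinOn_iff.2 hmin)).symm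

theorem Submodule.inner_sub_eq_zero_of_forall_norm_sub_le (K : Submodule ℝ F) {u v : F}
    (hv : v ∈ K) (hmin : ∀ w ∈ K, ‖u - v‖ ≤ ‖u - w‖) : ∀ w ∈ K, ⟪u - v, w⟫ = 0 :=
  (Submodule.norm_eq_iInf_iff_real_inner_eq_zero K hv).1
    (IsMinOn.iInf_eq (f := fun w => ‖u - w‖) (s := K) hv (isMinOn_iff.2 hmin)).symm

theorem inner_sub_self_eq_zero_of_forall_norm_sub_smul_le {u v : F}
    (hmin : ∀ t : ℝ, 0 ≤ t → ‖u - v‖ ≤ ‖u - t • v‖) : ⟪u - v, v⟫ = 0 := by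
  set ray : Set F := LinearMap.toSpanSingleton ℝ F v '' Set.Ici (0 : ℝ)
  have hray : ∀ t : ℝ, 0 ≤ t → t • v ∈ ray := fun t ht => ⟨t, ht, rfl⟩
  have hvar := inner_sub_le_zero_of_forall_norm_sub_le ((convex_Ici (0 : ℝ)).linear_image _)
    (by simpa only [one_smul] using hray 1 zero_le_one) (by rintro _ ⟨t, ht, rfl⟩; exact hmin t ht)
  have hzero : ⟪u - v, 0 - v⟫ ≤ 0 := hvar 0 (by simpa only [zero_smul] using hray 0 le_rfl)
  have htwo : ⟪u - v, (2 : ℝ) • v - v⟫ ≤ 0 := hvar _ (hray 2 zero_le_two)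
  rw [zero_sub, inner_neg_right] at hzero
  rw [two_smul, add_sub_cancel_right] at htwo
  linarith

theorem norm_sq_eq_norm_sq_add_norm_sub_sq_of_inner_sub_eq_zero {a b : F}
    (h : ⟪a - b, b⟫ = 0) : ‖a‖ ^ 2 = ‖b‖ ^ 2 + ‖a - b‖ ^ 2 := by
  have hab : ⟪a, b⟫ = ‖b‖ ^ 2 := by
    rwa [inner_sub_left, real_inner_self_eq_norm_sq, sub_eq_zero] at h
  rw [norm_sub_sq_real, hab]
  ring

end

theorem stmt_2_general {H : Type*} [NormedAddCommGroup H] [InnerProductSpace ℝ H]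
    (Ghat : Set H)
    (hcone : ∀ g ∈ Ghat, ∀ γ : ℝ, 0 ≤ γ → γ • g ∈ Ghat)
    (κ κhat κbar : H)
    (hκhat : κhat ∈ Ghat) (hκhatmin : ∀ x ∈ Ghat, ‖κ - κhat‖ ≤ ‖κ - x‖)
    (hκbar : κbar ∈ closure (Submodule.span ℝ Ghat : Set H))
    (hκbarmin : ∀ x ∈ closure (Submodule.span ℝ Ghat : Set H), ‖κ - κbar‖ ≤ ‖κ - x‖) :
    ‖κhat‖ ≤ ‖κbar‖ ∧ (κhat ≠ κbar → ‖κhat‖ < ‖κbar‖) := by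
  have hhat : ⟪κ - κhat, κhat⟫ = 0 :=
    inner_sub_self_eq_zero_of_forall_norm_sub_smul_le fun t ht =>
      hκhatmin _ (hcone κhat hκhat t ht)
  have hbar : ⟪κ - κbar, κhat⟫ = 0 :=
    (Submodule.span ℝ Ghat).topologicalClosure.inner_sub_eq_zero_of_forall_norm_sub_le hκbar
      hκbarmin κhat (subset_closure (Submodule.subset_span hκhat))
  have horth : ⟪κbar - κhat, κhat⟫ = 0 := by
    rw [← sub_sub_sub_cancel_left κhat κbar κ, inner_sub_left, hhat, hbar, sub_zero]
  have hpyth := norm_sq_eq_norm_sq_add_norm_sub_sq_of_inner_sub_eq_zero horth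
  refine ⟨?_, fun hne => ?_⟩
  · exact (pow_le_pow_iff_left₀ (norm_nonneg _) (norm_nonneg _) two_ne_zero).1
      (by nlinarith [sq_nonneg ‖κbar - κhat‖])
  · have hpos : 0 < ‖κbar - κhat‖ := norm_pos_iff.2 (sub_ne_zero.2 hne.symm)
    exact (pow_lt_pow_iff_left₀ (norm_nonneg _) (norm_nonneg _) two_ne_zero).1
      (by nlinarith)

theorem stmt_2 {H : Type*} [NormedAddCommGroup H] [InnerProductSpace ℝ H] [CompleteSpace H]
    (Ghat : Set H) (hGc : IsClosed Ghat) (hGconv : Convex ℝ Ghat)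
    (hcone : ∀ g ∈ Ghat, ∀ γ : ℝ, 0 ≤ γ → γ • g ∈ Ghat)
    (κ κhat κbar : H)
    (hκhat : κhat ∈ Ghat) (hκhatmin : ∀ x ∈ Ghat, ‖κ - κhat‖ ≤ ‖κ - x‖)
    (hκbar : κbar ∈ closure (Submodule.span ℝ Ghat : Set H))
    (hκbarmin : ∀ x ∈ closure (Submodule.span ℝ Ghat : Set H), ‖κ - κbar‖ ≤ ‖κ - x‖) :
    ‖κhat‖ ≤ ‖κbar‖ ∧ (κhat ≠ κbar → ‖κhat‖ < ‖κbar‖) :=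
  stmt_2_general Ghat hcone κ κhat κbar hκhat hκhatmin hκbar hκbarmin
end

section
/- In the setting of the previous finite-dimensional nuisance model, for any ψ ∈ L²(P; ℝᵏ) with E ψ = 0, E(ψ Λᵀ) = I_k and E(ψ Δᵀ) = 0, one has Cov ψ ≥ 𝓙⁻¹ in the Loewner order, with equality iff ψ = ψ_eff almost surely. -/
/-!
Let `η = Λ - 𝓒𝓓⁻¹Δ` be the residual of `Λ` after projection onto `Δ`. Then `E(ηΔᵀ) = 0`,
`E(ηηᵀ) = 𝓙` and `ψ_eff = 𝓙⁻¹η`, while the constraints on `ψ` give `E(ψηᵀ) = I`. Hence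
`E(ψψ_effᵀ) = 𝓙⁻¹ = E(ψ_effψ_effᵀ)`: the error `ψ - ψ_eff` is orthogonal to `ψ_eff`, so
`Cov ψ - 𝓙⁻¹ = E((ψ - ψ_eff)(ψ - ψ_eff)ᵀ)`, a Gram matrix, which is positive semidefinite and
vanishes exactly when `ψ = ψ_eff` almost surely.
-/

open MeasureTheory Matrix

lemma MeasureTheory.MemLp.mulVec {Ω ι κ : Type*} [MeasurableSpace Ω] {P : Measure Ω}
    [Fintype ι] [Fintype κ] {p : ENNReal} {f : Ω → ι → ℝ} (A : Matrix κ ι ℝ) (hf : MemLp f p P) :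
    MemLp (fun x => A *ᵥ f x) p P :=
  A.mulVecLin.toContinuousLinearMap.comp_memLp' hf

noncomputable def crossMoment {Ω ι κ : Type*} [MeasurableSpace Ω] (P : Measure Ω)
    (f : Ω → ι → ℝ) (g : Ω → κ → ℝ) : Matrix ι κ ℝ :=
  fun i j => ∫ x, f x i * g x j ∂P

section CrossMoment

variable {Ω ι κ ν : Type*} [MeasurableSpace Ω] {P : Measure Ω}
  {f f' : Ω → ι → ℝ} {g g' : Ω → κ → ℝ}

lemma crossMoment_transpose : (crossMoment P f g)ᵀ = crossMoment P g f := by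
  ext i j
  simp only [crossMoment, transpose_apply, mul_comm]

lemma crossMoment_congr_ae (hf : f =ᵐ[P] f') (hg : g =ᵐ[P] g') :
    crossMoment P f g = crossMoment P f' g' := by
  ext i j
  refine integral_congr_ae ?_
  filter_upwards [hf, hg] with x hfx hgx
  rw [hfx, hgx]

variable [Fintype ι] [Fintype κ]

lemma integrable_mul_apply_of_memLp_two (hf : MemLp f 2 P) (hg : MemLp g 2 P) (i : ι) (j : κ) :
    Integrable (fun x => f x i * g x j) P :=
  (hf.eval i).integrable_mul (hg.eval j)

lemma crossMoment_sub_left (hf : MemLp f 2 P) (hf' : MemLp f' 2 P) (hg : MemLp g 2 P) :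
    crossMoment P (f - f') g = crossMoment P f g - crossMoment P f' g := by
  ext i j
  simp only [crossMoment, Pi.sub_apply, sub_mul]
  exact integral_sub (integrable_mul_apply_of_memLp_two hf hg i j)
    (integrable_mul_apply_of_memLp_two hf' hg i j)

lemma crossMoment_sub_right (hf : MemLp f 2 P) (hg : MemLp g 2 P) (hg' : MemLp g' 2 P) :
    crossMoment P f (g - g') = crossMoment P f g - crossMoment P f g' := by
  rw [← transpose_transpose (crossMoment P f _), crossMoment_transpose,
    crossMoment_sub_left hg hg' hf, transpose_sub, crossMoment_transpose, crossMoment_transpose]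

lemma crossMoment_mulVec_left (A : Matrix ν ι ℝ) (hf : MemLp f 2 P) (hg : MemLp g 2 P) :
    crossMoment P (fun x => A *ᵥ f x) g = A * crossMoment P f g := by
  ext i j
  simp only [crossMoment, mul_apply, mulVec, dotProduct, Finset.sum_mul, mul_assoc]
  rw [integral_finsetSum _ fun l _ => (integrable_mul_apply_of_memLp_two hf hg l j).const_mul _]
  simp only [integral_const_mul]

lemma crossMoment_mulVec_right (B : Matrix ν κ ℝ) (hf : MemLp f 2 P) (hg : MemLp g 2 P) :
    crossMoment P f (fun x => B *ᵥ g x) = crossMoment P f g * Bᵀ := by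
  rw [← transpose_transpose (crossMoment P f _), crossMoment_transpose,
    crossMoment_mulVec_left B hg hf, transpose_mul, crossMoment_transpose]

lemma dotProduct_crossMoment_mulVec (hf : MemLp f 2 P) (hg : MemLp g 2 P) (v : ι → ℝ)
    (w : κ → ℝ) : v ⬝ᵥ (crossMoment P f g *ᵥ w) = ∫ x, (v ⬝ᵥ f x) * (w ⬝ᵥ g x) ∂P := by
  have hint : ∀ i j, Integrable (fun x => v i * w j * (f x i * g x j)) P := fun i j =>
    (integrable_mul_apply_of_memLp_two hf hg i j).const_mul _
  have hexpand : ∀ x, (v ⬝ᵥ f x) * (w ⬝ᵥ g x) = ∑ i, ∑ j, v i * w j * (f x i * g x j) :=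
    fun x => by simp only [dotProduct, Finset.sum_mul_sum, mul_mul_mul_comm]
  simp_rw [hexpand]
  rw [integral_finsetSum _ fun i _ => integrable_finsetSum _ fun j _ => hint i j]
  simp_rw [integral_finsetSum _ fun j _ => hint _ j, integral_const_mul]
  simp only [crossMoment, mulVec, dotProduct, Finset.mul_sum]
  exact Finset.sum_congr rfl fun i _ => Finset.sum_congr rfl fun j _ => by ring

lemma crossMoment_self_posSemidef (hf : MemLp f 2 P) : (crossMoment P f f).PosSemidef := by
  refine .of_dotProduct_mulVec_nonneg ?_ fun v => ?_
  · rw [IsHermitian, conjTranspose_eq_transpose_of_trivial, crossMoment_transpose]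
  · rw [star_trivial, dotProduct_crossMoment_mulVec hf hf]
    exact integral_nonneg fun x => mul_self_nonneg _

lemma crossMoment_self_eq_zero_iff (hf : MemLp f 2 P) : crossMoment P f f = 0 ↔ f =ᵐ[P] 0 := by
  refine ⟨fun h => ?_, fun h => (crossMoment_congr_ae h h).trans (by ext; simp [crossMoment])⟩
  have hcoord : ∀ i, ∀ᵐ x ∂P, f x i * f x i = 0 := fun i =>
    (integral_eq_zero_iff_of_nonneg (fun x => mul_self_nonneg (f x i))
      (integrable_mul_apply_of_memLp_two hf hf i i)).1 (congrFun₂ h i i)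
  filter_upwards [ae_all_iff.2 hcoord] with x hx
  exact funext fun i => mul_self_eq_zero.1 (hx i)

lemma crossMoment_sub_sub_of_crossMoment_eq (hf : MemLp f 2 P) (hf' : MemLp f' 2 P)
    (h : crossMoment P f f' = crossMoment P f' f') :
    crossMoment P (f - f') (f - f') = crossMoment P f f - crossMoment P f' f' := by
  have h' : crossMoment P f' f = crossMoment P f' f' := by
    rw [← crossMoment_transpose, h, crossMoment_transpose]
  rw [crossMoment_sub_left hf hf' (hf.sub hf'), crossMoment_sub_right hf hf hf',
    crossMoment_sub_right hf' hf hf', h, h']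
  abel

lemma crossMoment_sub_projection_self [DecidableEq κ] {C : Matrix ι κ ℝ} {D : Matrix κ κ ℝ}
    (hf : MemLp f 2 P) (hg : MemLp g 2 P) (hC : crossMoment P f g = C)
    (hD : crossMoment P g g = D) (hDdet : IsUnit D.det) :
    crossMoment P (f - fun x => (C * D⁻¹) *ᵥ g x) (f - fun x => (C * D⁻¹) *ᵥ g x) =
      crossMoment P f f - C * D⁻¹ * Cᵀ := by
  have hAg := hg.mulVec (C * D⁻¹)
  have horth : crossMoment P (f - fun x => (C * D⁻¹) *ᵥ g x) g = 0 := by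
    rw [crossMoment_sub_left hf hAg hg, crossMoment_mulVec_left _ hg hg, hC, hD,
      nonsing_inv_mul_cancel_right D C hDdet, sub_self]
  rw [crossMoment_sub_right (hf.sub hAg) hf hAg, crossMoment_mulVec_right _ (hf.sub hAg) hg,
    horth, Matrix.zero_mul, sub_zero, crossMoment_sub_left hf hAg hf,
    crossMoment_mulVec_left _ hg hf, ← crossMoment_transpose (f := f) (g := g), hC,
    Matrix.mul_assoc]

lemma crossMoment_sub_inv_mulVec_self [DecidableEq ι] {ψ η : Ω → ι → ℝ} {J : Matrix ι ι ℝ}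
    (hψ : MemLp ψ 2 P) (hη : MemLp η 2 P) (hηη : crossMoment P η η = J) (hJ : J.PosDef)
    (hψη : crossMoment P ψ η = 1) :
    crossMoment P (ψ - fun x => J⁻¹ *ᵥ η x) (ψ - fun x => J⁻¹ *ᵥ η x) =
      crossMoment P ψ ψ - J⁻¹ := by
  have hJinv : J⁻¹ᵀ = J⁻¹ := by
    rw [← conjTranspose_eq_transpose_of_trivial]
    exact hJ.isHermitian.inv
  have hproj : crossMoment P (fun x => J⁻¹ *ᵥ η x) (fun x => J⁻¹ *ᵥ η x) = J⁻¹ := by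
    rw [crossMoment_mulVec_left _ hη (hη.mulVec _), crossMoment_mulVec_right _ hη hη, hηη,
      nonsing_inv_mul_cancel_left J _ (isUnit_iff_ne_zero.2 hJ.det_pos.ne'), hJinv]
  rw [crossMoment_sub_sub_of_crossMoment_eq hψ (hη.mulVec _) ?_, hproj]
  rw [hproj, crossMoment_mulVec_right _ hψ hη, hψη, Matrix.one_mul, hJinv]

end CrossMoment

theorem stmt_15_general {Ω : Type*} [MeasurableSpace Ω] (P : Measure Ω)
    {k m : ℕ}
    (Λ : Ω → Fin k → ℝ) (Δ : Ω → Fin m → ℝ)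
    (hΛ : ∀ i, MemLp (fun x => Λ x i) 2 P) (hΔ : ∀ j, MemLp (fun x => Δ x j) 2 P)
    (CovΛ : Matrix (Fin k) (Fin k) ℝ) (hCovΛ : CovΛ = fun i j => ∫ x, Λ x i * Λ x j ∂P)
    (𝓒 : Matrix (Fin k) (Fin m) ℝ) (h𝓒 : 𝓒 = fun i j => ∫ x, Λ x i * Δ x j ∂P)
    (𝓓 : Matrix (Fin m) (Fin m) ℝ) (h𝓓 : 𝓓 = fun i j => ∫ x, Δ x i * Δ x j ∂P)
    (h𝓓pos : 𝓓.PosDef)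
    (𝓙 : Matrix (Fin k) (Fin k) ℝ) (h𝓙 : 𝓙 = CovΛ - 𝓒 * 𝓓⁻¹ * 𝓒ᵀ)
    (h𝓙pos : 𝓙.PosDef)
    (ψeff : Ω → Fin k → ℝ) (hψeff : ψeff = fun x => 𝓙⁻¹ *ᵥ (Λ x - (𝓒 * 𝓓⁻¹) *ᵥ Δ x))
    (ψ : Ω → Fin k → ℝ) (hψL2 : ∀ i, MemLp (fun x => ψ x i) 2 P)
    (hψΛ : ∀ i j, ∫ x, ψ x i * Λ x j ∂P = (1 : Matrix (Fin k) (Fin k) ℝ) i j)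
    (hψΔ : ∀ i j, ∫ x, ψ x i * Δ x j ∂P = 0)
    (Covψ : Matrix (Fin k) (Fin k) ℝ) (hCovψ : Covψ = fun i j => ∫ x, ψ x i * ψ x j ∂P) :
    (Covψ - 𝓙⁻¹).PosSemidef ∧ (Covψ = 𝓙⁻¹ ↔ ∀ᵐ x ∂P, ψ x = ψeff x) := by
  replace hΛ : MemLp Λ 2 P := memLp_pi_iff.2 hΛ
  replace hΔ : MemLp Δ 2 P := memLp_pi_iff.2 hΔ
  have hψ : MemLp ψ 2 P := memLp_pi_iff.2 hψL2
  have hηη := crossMoment_sub_projection_self hΛ hΔ h𝓒.symm h𝓓.symm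
    (isUnit_iff_ne_zero.2 h𝓓pos.det_pos.ne')
  rw [show crossMoment P Λ Λ = CovΛ from hCovΛ.symm, ← h𝓙] at hηη
  set η := Λ - fun x => (𝓒 * 𝓓⁻¹) *ᵥ Δ x
  have hη : MemLp η 2 P := hΛ.sub (hΔ.mulVec _)
  have hψη : crossMoment P ψ η = 1 := by
    rw [crossMoment_sub_right hψ hΛ (hΔ.mulVec _), crossMoment_mulVec_right _ hψ hΔ,
      show crossMoment P ψ Δ = 0 from funext₂ hψΔ, Matrix.zero_mul, sub_zero]
    exact funext₂ hψΛ
  have hψeffL2 : MemLp ψeff 2 P := hψeff ▸ hη.mulVec 𝓙⁻¹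
  have hresidual : crossMoment P (ψ - ψeff) (ψ - ψeff) = Covψ - 𝓙⁻¹ := by
    rw [hψeff, hCovψ]
    exact crossMoment_sub_inv_mulVec_self hψ hη hηη h𝓙pos hψη
  rw [← sub_eq_zero, ← hresidual, crossMoment_self_eq_zero_iff (hψ.sub hψeffL2), sub_ae_eq_zero]
  exact ⟨crossMoment_self_posSemidef (hψ.sub hψeffL2), Iff.rfl⟩

theorem stmt_15 {Ω : Type*} [MeasurableSpace Ω] (P : Measure Ω) [IsProbabilityMeasure P]
    {k m : ℕ}
    (Λ : Ω → Fin k → ℝ) (Δ : Ω → Fin m → ℝ)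
    (hΛ : ∀ i, MemLp (fun x => Λ x i) 2 P) (hΔ : ∀ j, MemLp (fun x => Δ x j) 2 P)
    (hEΛ : ∀ i, ∫ x, Λ x i ∂P = 0) (hEΔ : ∀ j, ∫ x, Δ x j ∂P = 0)
    (CovΛ : Matrix (Fin k) (Fin k) ℝ) (hCovΛ : CovΛ = fun i j => ∫ x, Λ x i * Λ x j ∂P)
    (𝓒 : Matrix (Fin k) (Fin m) ℝ) (h𝓒 : 𝓒 = fun i j => ∫ x, Λ x i * Δ x j ∂P)
    (𝓓 : Matrix (Fin m) (Fin m) ℝ) (h𝓓 : 𝓓 = fun i j => ∫ x, Δ x i * Δ x j ∂P)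
    (h𝓓pos : 𝓓.PosDef)
    (𝓙 : Matrix (Fin k) (Fin k) ℝ) (h𝓙 : 𝓙 = CovΛ - 𝓒 * 𝓓⁻¹ * 𝓒ᵀ)
    (h𝓙pos : 𝓙.PosDef)
    (ψeff : Ω → Fin k → ℝ) (hψeff : ψeff = fun x => 𝓙⁻¹ *ᵥ (Λ x - (𝓒 * 𝓓⁻¹) *ᵥ Δ x))
    (ψ : Ω → Fin k → ℝ) (hψL2 : ∀ i, MemLp (fun x => ψ x i) 2 P)
    (hψ0 : ∀ i, ∫ x, ψ x i ∂P = 0)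
    (hψΛ : ∀ i j, ∫ x, ψ x i * Λ x j ∂P = (1 : Matrix (Fin k) (Fin k) ℝ) i j)
    (hψΔ : ∀ i j, ∫ x, ψ x i * Δ x j ∂P = 0)
    (Covψ : Matrix (Fin k) (Fin k) ℝ) (hCovψ : Covψ = fun i j => ∫ x, ψ x i * ψ x j ∂P) :
    (Covψ - 𝓙⁻¹).PosSemidef ∧ (Covψ = 𝓙⁻¹ ↔ ∀ᵐ x ∂P, ψ x = ψeff x) :=
  stmt_15_general P Λ Δ hΛ hΔ CovΛ hCovΛ 𝓒 h𝓒 𝓓 h𝓓 h𝓓pos 𝓙 h𝓙 h𝓙pos ψeff hψeff ψ hψL2 hψΛ hψΔ Covψ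
    hCovψ
end
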